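/- There exists an absolute constant c such that for every string S of length n ≥ 2 and every index i ∈ [1..n], the number of highly periodic runs S[ℓ..r] of S with ℓ ≤ i ≤ r is at most c·log₂ n. -/
import Mathlib


universe u

variable {α : Type u}

/-- `sub S i j` is the substring `S[i..j]` (1-indexed, inclusive endpoints). -/
def sub (S : List α) (i j : ℕ) : List α := (S.take j).drop (i - 1)

/-- `ρ` is a period of `T`: `1 ≤ ρ` and `T[i] = T[i+ρ]` for all valid `i`. -/
def IsPeriod (T : List α) (ρ : ℕ) : Prop :=
  1 ≤ ρ ∧ ∀ i : ℕ, i + ρ < T.length → T[i]? = T[i + ρ]?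

/-- The minimal period of `T`. -/
noncomputable def per (T : List α) : ℕ := sInf {ρ : ℕ | IsPeriod T ρ}

/-- `S[ℓ..r]` is a `ρ`-periodic run of `S`. -/
def IsRun (S : List α) (ρ ℓ r : ℕ) : Prop :=
  1 ≤ ℓ ∧ ℓ ≤ r ∧ r ≤ S.length ∧
  per (sub S ℓ r) = ρ ∧ 2 * ρ ≤ r - ℓ + 1 ∧
  ∀ ℓ' r' : ℕ, 1 ≤ ℓ' → ℓ' ≤ ℓ → r ≤ r' → r' ≤ S.length →
    per (sub S ℓ' r') = ρ → 2 * ρ ≤ r' - ℓ' + 1 → ℓ' = ℓ ∧ r' = r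


namespace HPRuns

def PerOn {γ : Type*} (f : ℕ → γ) (a b ρ : ℕ) : Prop :=
  ∀ x, a ≤ x → x + ρ < b → f x = f (x + ρ)

variable {γ : Type*} {f : ℕ → γ}

lemma perOn_mono {a b a' b' ρ : ℕ} (h : PerOn f a b ρ) (ha : a ≤ a') (hb : b' ≤ b) :
    PerOn f a' b' ρ :=
  fun x hx hxb => h x (le_trans ha hx) (lt_of_lt_of_le hxb hb)

lemma perOn_chain {a b g : ℕ} (h : PerOn f a b g) :
    ∀ t y, a ≤ y → y + t * g < b → f y = f (y + t * g) := by
  intro t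
  induction t with
  | zero => intro y _ _; simp
  | succ t ih =>
    intro y hy htop
    rw [Nat.succ_mul] at htop ⊢
    have e : y + (t * g + g) = y + t * g + g := by omega
    rw [e] at htop ⊢
    have h1 : f y = f (y + t * g) := ih y hy (by omega)
    have h2 : f (y + t * g) = f (y + t * g + g) := h (y + t * g) (by omega) htop
    rw [h1, h2]

lemma perOn_shift {A E p q : ℕ} (hpq : p ≤ q) (hp : PerOn f A E p) (hq : PerOn f A E q) :
    PerOn f A (E - p) (q - p) := by
  intro x hx hxb
  have hxq : x + q < E := by omega
  have h1 : f x = f (x + q) := hq x hx hxq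
  have h2 : f (x + (q - p)) = f (x + (q - p) + p) := hp (x + (q - p)) (by omega) (by omega)
  have e : x + (q - p) + p = x + q := by omega
  rw [e] at h2
  rw [h1, ← h2]

lemma perOn_ext {A E p g : ℕ} (hg : g ∣ p) (hp1 : 1 ≤ p) (h2p : A + 2 * p ≤ E)
    (hP : PerOn f A E p) (hG : PerOn f A (E - p) g) : PerOn f A E g := by
  have hg1 : 1 ≤ g := by
    rcases Nat.eq_zero_or_pos g with h0 | h0
    · subst h0; simp at hg; omega
    · exact h0
  intro x hx hxg
  by_cases hc : x + g < E - p
  · exact hG x hx hc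
  · by_cases hxa : A + p ≤ x
    · have e1 : f (x - p) = f x := by
        have := hP (x - p) (by omega) (by omega)
        rwa [Nat.sub_add_cancel (by omega)] at this
      have e2 : f (x - p) = f (x - p + g) := hG (x - p) (by omega) (by omega)
      have e3 : f (x - p + g) = f (x + g) := by
        have := hP (x - p + g) (by omega) (by omega)
        rwa [show x - p + g + p = x + g by omega] at this
      rw [← e1, e2, e3]
    · -- x < A + p, x + g ≥ E - p
      have hgp : g ≤ p := Nat.le_of_dvd hp1 hg
      have hpxg : p ≤ x + g := by omega
      obtain ⟨m, hm⟩ := hg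
      have hm1 : 1 ≤ m := by
        rcases Nat.eq_zero_or_pos m with h0 | h0
        · subst h0; omega
        · exact h0
      have e1 : f (x + g - p) = f (x + g) := by
        have := hP (x + g - p) (by omega) (by omega)
        rwa [Nat.sub_add_cancel (by omega)] at this
      have hmg : (m - 1) * g = p - g := by
        rw [Nat.sub_mul, one_mul, hm, Nat.mul_comm]
      have hchain : f (x + g - p) = f (x + g - p + (m - 1) * g) := by
        refine perOn_chain hG (m - 1) (x + g - p) (by omega) ?_
        rw [hmg]
        omega
      rw [hmg, show x + g - p + (p - g) = x by omega] at hchain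
      rw [← e1, ← hchain]

lemma perOn_fw_aux : ∀ (n p q A E : ℕ), p + q ≤ n → PerOn f A E p → PerOn f A E q →
    p + q ≤ (E - A) + Nat.gcd p q → PerOn f A E (Nat.gcd p q) := by
  intro n
  induction n with
  | zero =>
    intro p q A E hn hp hq _
    have hp0 : p = 0 := by omega
    have hq0 : q = 0 := by omega
    subst hp0; subst hq0
    simpa using hp
  | succ n ih =>
    intro p q A E hn hp hq hlen
    rcases Nat.eq_zero_or_pos p with hp0 | hp0
    · subst hp0; simpa using hq
    rcases Nat.eq_zero_or_pos q with hq0 | hq0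
    · subst hq0; simpa using hp
    rcases lt_trichotomy p q with hlt | heq | hgt
    · -- p < q
      have hsh : PerOn f A (E - p) (q - p) := perOn_shift (le_of_lt hlt) hp hq
      have hpE : PerOn f A (E - p) p := perOn_mono hp le_rfl (Nat.sub_le _ _)
      have hgcd : Nat.gcd p (q - p) = Nat.gcd p q := by
        rw [← Nat.gcd_add_self_right p (q - p), show q - p + p = q by omega]
      have hgq : Nat.gcd p q ≤ q := Nat.le_of_dvd hq0 (Nat.gcd_dvd_right p q)
      have hple : p ≤ E - A := by omega
      have hgsub : Nat.gcd p q ≤ q - p := by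
        refine Nat.le_of_dvd (by omega) ?_
        exact Nat.dvd_sub (Nat.gcd_dvd_right p q) (Nat.gcd_dvd_left p q)
      have hrec : PerOn f A (E - p) (Nat.gcd p q) := by
        have := ih p (q - p) A (E - p) (by omega) hpE hsh (by rw [hgcd]; omega)
        rwa [hgcd] at this
      exact perOn_ext (Nat.gcd_dvd_left p q) hp0 (by omega) hp hrec
    · subst heq; rw [Nat.gcd_self]; exact hp
    · -- q < p
      have hsh : PerOn f A (E - q) (p - q) := perOn_shift (le_of_lt hgt) hq hp
      have hqE : PerOn f A (E - q) q := perOn_mono hq le_rfl (Nat.sub_le _ _)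
      have hgcd : Nat.gcd q (p - q) = Nat.gcd p q := by
        rw [← Nat.gcd_add_self_right q (p - q), show p - q + q = p by omega, Nat.gcd_comm]
      have hgp : Nat.gcd p q ≤ p := Nat.le_of_dvd hp0 (Nat.gcd_dvd_left p q)
      have hgsub : Nat.gcd p q ≤ p - q := by
        refine Nat.le_of_dvd (by omega) ?_
        exact Nat.dvd_sub (Nat.gcd_dvd_left p q) (Nat.gcd_dvd_right p q)
      have hrec : PerOn f A (E - q) (Nat.gcd p q) := by
        have := ih q (p - q) A (E - q) (by omega) hqE hsh (by rw [hgcd]; omega)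
        rwa [hgcd] at this
      have hdvd : Nat.gcd p q ∣ q := Nat.gcd_dvd_right p q
      exact perOn_ext hdvd hq0 (by omega) hq hrec

lemma perOn_fw {p q A E : ℕ} (hp : PerOn f A E p) (hq : PerOn f A E q)
    (hlen : p + q ≤ (E - A) + Nat.gcd p q) : PerOn f A E (Nat.gcd p q) :=
  perOn_fw_aux (p + q) p q A E le_rfl hp hq hlen

lemma perOn_prop {A B a' b' P q : ℕ} (hP1 : 1 ≤ P) (hq1 : 1 ≤ q)
    (hP : PerOn f A B P) (hq : PerOn f a' b' q)
    (ha : A ≤ a') (hb : b' ≤ B) (hlen : a' + P + q ≤ b') : PerOn f A B q := by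
  have high : ∀ x, a' ≤ x → x + q < B → f x = f (x + q) := by
    intro x
    induction x using Nat.strong_induction_on with
    | _ x ihx =>
      intro hx hxb
      by_cases hc : x + q < b'
      · exact hq x hx hc
      · have h1 : a' + P ≤ x := by omega
        have e1 : f (x - P) = f x := by
          have := hP (x - P) (by omega) (by omega)
          rwa [Nat.sub_add_cancel (by omega)] at this
        have e2 : f (x - P + q) = f (x + q) := by
          have := hP (x - P + q) (by omega) (by omega)
          rwa [show x - P + q + P = x + q by omega] at this
        have e3 : f (x - P) = f (x - P + q) := ihx (x - P) (by omega) (by omega) (by omega)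
        rw [← e1, e3, e2]
  have main : ∀ k x, a' ≤ x + k → A ≤ x → x + q < B → f x = f (x + q) := by
    intro k
    induction k with
    | zero => intro x h0 hx hxb; exact high x (by omega) hxb
    | succ k ihk =>
      intro x hk hx hxb
      by_cases hxa : a' ≤ x
      · exact high x hxa hxb
      · have e1 : f x = f (x + P) := hP x hx (by omega)
        have e2 : f (x + q) = f (x + q + P) := hP (x + q) (by omega) (by omega)
        have e3 : f (x + P) = f (x + P + q) := ihk (x + P) (by omega) (by omega) (by omega)
        rw [e1, e3, show x + P + q = x + q + P by omega, ← e2]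
  intro x hx hxb
  exact main a' x (by omega) hx hxb

lemma perOn_glue {a1 b1 a2 b2 ρ : ℕ} (h1 : PerOn f a1 b1 ρ) (h2 : PerOn f a2 b2 ρ)
    (ha : a1 ≤ a2) (hov : a2 + ρ ≤ b1) : PerOn f a1 (max b1 b2) ρ := by
  intro x hx hxb
  by_cases hc : x + ρ < b1
  · exact h1 x hx hc
  · have hb2 : x + ρ < b2 := by omega
    exact h2 x (by omega) hb2

end HPRuns

namespace HPRuns

variable {α : Type u}

lemma sub_length (S : List α) {l r : ℕ} (h1 : 1 ≤ l) (h2 : l ≤ r) (h3 : r ≤ S.length) :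
    (sub S l r).length = r - l + 1 := by
  simp [sub]
  omega

lemma sub_getElem? (S : List α) {l r t : ℕ} (h : l - 1 + t < r) :
    (sub S l r)[t]? = S[l - 1 + t]? := by
  simp [sub, List.getElem?_drop, List.getElem?_take, h]

lemma isPeriod_iff (S : List α) {l r ρ : ℕ} (h1 : 1 ≤ l) (h2 : l ≤ r) (h3 : r ≤ S.length) :
    IsPeriod (sub S l r) ρ ↔ (1 ≤ ρ ∧ PerOn (fun x => S[x]?) (l - 1) r ρ) := by
  constructor
  · rintro ⟨hρ, hmain⟩
    refine ⟨hρ, ?_⟩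
    intro x hx hxρ
    have ht := hmain (x - (l - 1)) (by rw [sub_length S h1 h2 h3]; omega)
    rwa [sub_getElem? S (by omega), sub_getElem? S (by omega),
      show l - 1 + (x - (l - 1)) = x by omega,
      show l - 1 + (x - (l - 1) + ρ) = x + ρ by omega] at ht
  · rintro ⟨hρ, hmain⟩
    refine ⟨hρ, ?_⟩
    intro t htl
    rw [sub_length S h1 h2 h3] at htl
    rw [sub_getElem? S (by omega), sub_getElem? S (by omega)]
    have := hmain (l - 1 + t) (by omega) (by omega)
    rwa [show l - 1 + t + ρ = l - 1 + (t + ρ) by omega] at this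

lemma per_periodSet_nonempty (T : List α) : {ρ : ℕ | IsPeriod T ρ}.Nonempty :=
  ⟨T.length + 1, ⟨by omega, fun i h => absurd h (by omega)⟩⟩

lemma per_isPeriod (T : List α) : IsPeriod T (per T) := Nat.sInf_mem (per_periodSet_nonempty T)

lemma per_le {T : List α} {q : ℕ} (h : IsPeriod T q) : per T ≤ q := Nat.sInf_le h

/-- The basic data we extract from a run. -/
lemma run_perOn {S : List α} {ρ l r : ℕ} (h : IsRun S ρ l r) :
    1 ≤ ρ ∧ PerOn (fun x => S[x]?) (l - 1) r ρ := by
  obtain ⟨h1, h2, h3, h4, _, _⟩ := h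
  exact (isPeriod_iff S h1 h2 h3).1 (h4 ▸ per_isPeriod _)

/-- Minimality of the period of a run. -/
lemma run_min {S : List α} {ρ l r : ℕ} (h : IsRun S ρ l r) {q : ℕ} (hq1 : 1 ≤ q)
    (hq : PerOn (fun x => S[x]?) (l - 1) r q) : ρ ≤ q := by
  obtain ⟨h1, h2, h3, h4, _, _⟩ := h
  have : IsPeriod (sub S l r) q := (isPeriod_iff S h1 h2 h3).2 ⟨hq1, hq⟩
  exact h4 ▸ per_le this

/-- Two runs with the same minimal period overlapping in at least ρ positions are equal. -/
lemma run_eq {S : List α} {ρ l1 r1 l2 r2 : ℕ}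
    (h1 : IsRun S ρ l1 r1) (h2 : IsRun S ρ l2 r2)
    (hov : max l1 l2 - 1 + ρ ≤ min r1 r2) : l1 = l2 ∧ r1 = r2 := by
  obtain ⟨h1ρ, hper1⟩ := run_perOn h1
  obtain ⟨-, hper2⟩ := run_perOn h2
  obtain ⟨h1a, h1b, h1c, h1per, h1len, h1max⟩ := h1
  obtain ⟨h2a, h2b, h2c, h2per, h2len, h2max⟩ := h2
  have hglue : PerOn (fun x => S[x]?) (min l1 l2 - 1) (max r1 r2) ρ := by
    rcases le_total l1 l2 with h | h
    · have h' := perOn_glue hper1 hper2 (by omega) (by omega)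
      have e : min l1 l2 = l1 := by omega
      rw [e]; exact h'
    · have h' := perOn_glue hper2 hper1 (by omega) (by omega)
      have e : min l1 l2 = l2 := by omega
      have e' : max r2 r1 = max r1 r2 := Nat.max_comm r2 r1
      rw [e, ← e']; exact h'
  have hbounds : 1 ≤ min l1 l2 ∧ min l1 l2 ≤ max r1 r2 ∧ max r1 r2 ≤ S.length := by omega
  have hmem : IsPeriod (sub S (min l1 l2) (max r1 r2)) ρ :=
    (isPeriod_iff S hbounds.1 hbounds.2.1 hbounds.2.2).2 ⟨h1ρ, hglue⟩
  have hperU : per (sub S (min l1 l2) (max r1 r2)) = ρ := by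
    have hle : per (sub S (min l1 l2) (max r1 r2)) ≤ ρ := per_le hmem
    have hp := per_isPeriod (sub S (min l1 l2) (max r1 r2))
    have hp' := (isPeriod_iff S hbounds.1 hbounds.2.1 hbounds.2.2).1 hp
    have hmono : PerOn (fun x => S[x]?) (l1 - 1) r1 (per (sub S (min l1 l2) (max r1 r2))) :=
      perOn_mono hp'.2 (by omega) (by omega)
    have hge : ρ ≤ per (sub S (min l1 l2) (max r1 r2)) := by
      have : IsPeriod (sub S l1 r1) (per (sub S (min l1 l2) (max r1 r2))) :=
        (isPeriod_iff S h1a h1b h1c).2 ⟨hp'.1, hmono⟩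
      exact h1per ▸ per_le this
    omega
  have e1 := h1max (min l1 l2) (max r1 r2) (by omega) (by omega) (by omega) (by omega)
    hperU (by omega)
  have e2 := h2max (min l1 l2) (max r1 r2) (by omega) (by omega) (by omega) (by omega)
    hperU (by omega)
  exact ⟨e1.1.symm.trans e2.1, e1.2.symm.trans e2.2⟩

/-- Key impossibility: two runs with distinct periods `ρ1 < ρ2 < 2ρ1` sharing a common
interval `[A, E)` (0-indexed) of length ≥ ρ1 + ρ2 + 1. -/
lemma cube_absurd {S : List α} {ρ1 ρ2 l1 r1 l2 r2 A E : ℕ}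
    (hr1 : IsRun S ρ1 l1 r1) (hr2 : IsRun S ρ2 l2 r2)
    (h12 : ρ1 < ρ2) (hrange : ρ2 < 2 * ρ1)
    (hA1 : l1 - 1 ≤ A) (hE1 : E ≤ r1) (hA2 : l2 - 1 ≤ A) (hE2 : E ≤ r2)
    (hlen : A + ρ1 + ρ2 + 1 ≤ E) : False := by
  obtain ⟨h1ρ, hper1⟩ := run_perOn hr1
  obtain ⟨h2ρ, hper2⟩ := run_perOn hr2
  have hK1 : PerOn (fun x => S[x]?) A E ρ1 := perOn_mono hper1 hA1 hE1
  have hK2 : PerOn (fun x => S[x]?) A E ρ2 := perOn_mono hper2 hA2 hE2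
  set d := ρ2 - ρ1 with hd
  have hd1 : 1 ≤ d := by omega
  have hW : PerOn (fun x => S[x]?) A (E - ρ1) d := perOn_shift (le_of_lt h12) hK1 hK2
  have hWρ : PerOn (fun x => S[x]?) A (E - ρ1) ρ1 := perOn_mono hK1 le_rfl (by omega)
  set g := Nat.gcd d ρ1 with hg
  have hg1 : 1 ≤ g := Nat.gcd_pos_of_pos_right d h1ρ
  have hgd : g ≤ d := Nat.le_of_dvd hd1 (Nat.gcd_dvd_left d ρ1)
  have hfw : PerOn (fun x => S[x]?) A (E - ρ1) g := perOn_fw hW hWρ (by omega)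
  have hprop : PerOn (fun x => S[x]?) (l1 - 1) r1 g :=
    perOn_prop h1ρ hg1 hper1 hfw hA1 (by omega) (by omega)
  have := run_min hr1 hg1 hprop
  omega

end HPRuns

namespace HPRuns

def bitOf (ρ : ℕ) : ℕ := if 3 * 2 ^ Nat.log 2 ρ ≤ 2 * ρ then 1 else 0

def cB (ρ : ℕ) : ℕ := 2 ^ Nat.log 2 ρ + bitOf ρ * 2 ^ (Nat.log 2 ρ - 1)

def cW (ρ : ℕ) : ℕ := 2 ^ (Nat.log 2 ρ - 1)

def GG (ρ : ℕ) : ℕ := cB ρ + 1 - cW ρ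

def clsOf (ρ : ℕ) : ℕ := 2 * Nat.log 2 ρ + bitOf ρ

lemma class_facts {ρ : ℕ} (hρ : 1 ≤ ρ) :
    cB ρ ≤ ρ ∧ ρ < cB ρ + cW ρ ∧ 1 ≤ cW ρ ∧ 2 * cW ρ ≤ cB ρ + 1 ∧ cW ρ ≤ cB ρ := by
  set s := Nat.log 2 ρ with hs
  have hup : ρ < 2 ^ (s + 1) := Nat.lt_pow_succ_log_self (by norm_num) ρ
  have hlow : 2 ^ s ≤ ρ := Nat.pow_log_le_self 2 (by omega)
  have hx : 1 ≤ 2 ^ (s - 1) := Nat.one_le_two_pow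
  by_cases hbit : 3 * 2 ^ s ≤ 2 * ρ
  · have hb : bitOf ρ = 1 := by rw [bitOf, ← hs, if_pos hbit]
    have hs1 : 1 ≤ s := by
      have h2ρ : 2 ≤ ρ := by
        rcases Nat.lt_or_ge ρ 2 with h | h
        · interval_cases ρ <;> simp_all <;> omega
        · exact h
      have := Nat.log_pos (b := 2) (by norm_num) h2ρ
      omega
    have hpow : 2 ^ s = 2 * 2 ^ (s - 1) := by
      rw [← pow_succ']
      congr 1
      omega
    have hpow2 : 2 ^ (s + 1) = 2 * 2 ^ s := by rw [← pow_succ']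
    rw [cB, cW, hb, ← hs]
    omega
  · have hb : bitOf ρ = 0 := by rw [bitOf, ← hs, if_neg hbit]
    have hpow2 : 2 ^ (s + 1) = 2 * 2 ^ s := by rw [← pow_succ']
    rcases Nat.eq_zero_or_pos s with hs0 | hs1
    · have hρ1 : ρ = 1 := by
        rw [hs0] at hup
        norm_num at hup
        omega
      rw [cB, cW, hb, ← hs, hs0, hρ1]
      norm_num
    · have hpow : 2 ^ s = 2 * 2 ^ (s - 1) := by
        rw [← pow_succ']
        congr 1
        omega
      rw [cB, cW, hb, ← hs]
      omega

lemma cls_eq {ρ1 ρ2 : ℕ} (h : clsOf ρ1 = clsOf ρ2) :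
    cB ρ1 = cB ρ2 ∧ cW ρ1 = cW ρ2 := by
  have hb1 : bitOf ρ1 = 0 ∨ bitOf ρ1 = 1 := by rw [bitOf]; split <;> simp
  have hb2 : bitOf ρ2 = 0 ∨ bitOf ρ2 = 1 := by rw [bitOf]; split <;> simp
  rw [clsOf, clsOf] at h
  have hlog : Nat.log 2 ρ1 = Nat.log 2 ρ2 := by omega
  have hbit : bitOf ρ1 = bitOf ρ2 := by omega
  rw [cB, cB, cW, cW, hlog, hbit]
  exact ⟨rfl, rfl⟩

end HPRuns

namespace HPRuns

variable {α : Type u}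

lemma div_close {u1 u2 G : ℕ} (hG : 1 ≤ G) (h : u1 / G = u2 / G) :
    u1 < u2 + G ∧ u2 < u1 + G := by
  have h1 := Nat.div_add_mod u1 G
  have h2 := Nat.div_add_mod u2 G
  have h3 : u1 % G < G := Nat.mod_lt _ hG
  have h4 : u2 % G < G := Nat.mod_lt _ hG
  rw [h] at h1
  omega

lemma famA_eq {S : List α} {i ρ1 ρ2 l1 r1 l2 r2 : ℕ}
    (hr1 : IsRun S ρ1 l1 r1) (hr2 : IsRun S ρ2 l2 r2)
    (h31 : 3 * ρ1 ≤ r1 - l1 + 1) (h32 : 3 * ρ2 ≤ r2 - l2 + 1)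
    (hl1 : l1 ≤ i) (hir1 : i ≤ r1) (hl2 : l2 ≤ i) (hir2 : i ≤ r2)
    (hu1 : i - l1 ≤ ρ1) (hu2 : i - l2 ≤ ρ2)
    (hcB : cB ρ1 = cB ρ2) (hcW : cW ρ1 = cW ρ2)
    (hslot : (i - l1) / GG ρ1 = (i - l2) / GG ρ2) : l1 = l2 ∧ r1 = r2 := by
  have h1ρ : 1 ≤ ρ1 := (run_perOn hr1).1
  have h2ρ : 1 ≤ ρ2 := (run_perOn hr2).1
  obtain ⟨hf1a, hf1b, hf1c, hf1d, hf1e⟩ := class_facts h1ρ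
  obtain ⟨hf2a, hf2b, hf2c, hf2d, hf2e⟩ := class_facts h2ρ
  have hGG : GG ρ1 = GG ρ2 := by rw [GG, GG, hcB, hcW]
  have hG1 : 1 ≤ GG ρ1 := by rw [GG]; omega
  rw [← hGG] at hslot
  have hclose := div_close hG1 hslot
  have h1l : 1 ≤ l1 := hr1.1
  have h2l : 1 ≤ l2 := hr2.1
  have h1r : l1 ≤ r1 := hr1.2.1
  have h2r : l2 ≤ r2 := hr2.2.1
  have hGval : GG ρ1 = cB ρ1 + 1 - cW ρ1 := rfl
  rcases lt_trichotomy ρ1 ρ2 with hlt | heq | hgt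
  · exfalso
    refine cube_absurd hr1 hr2 hlt (by omega)
      (le_max_left (l1 - 1) (l2 - 1)) (min_le_left (l1 - 1 + 3 * ρ1) (l2 - 1 + 3 * ρ2) |>.trans (by omega))
      (le_max_right (l1 - 1) (l2 - 1)) (min_le_right (l1 - 1 + 3 * ρ1) (l2 - 1 + 3 * ρ2) |>.trans (by omega))
      (by omega)
  · subst heq
    exact run_eq hr1 hr2 (by omega)
  · exfalso
    refine cube_absurd hr2 hr1 hgt (by omega)
      (le_max_right (l1 - 1) (l2 - 1)) (min_le_right (l1 - 1 + 3 * ρ1) (l2 - 1 + 3 * ρ2) |>.trans (by omega))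
      (le_max_left (l1 - 1) (l2 - 1)) (min_le_left (l1 - 1 + 3 * ρ1) (l2 - 1 + 3 * ρ2) |>.trans (by omega))
      (by omega)

lemma famB_eq {S : List α} {i ρ1 ρ2 l1 r1 l2 r2 : ℕ}
    (hr1 : IsRun S ρ1 l1 r1) (hr2 : IsRun S ρ2 l2 r2)
    (h31 : 3 * ρ1 ≤ r1 - l1 + 1) (h32 : 3 * ρ2 ≤ r2 - l2 + 1)
    (hl1 : l1 ≤ i) (hir1 : i ≤ r1) (hl2 : l2 ≤ i) (hir2 : i ≤ r2)
    (hv1 : r1 - i < ρ1) (hv2 : r2 - i < ρ2)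
    (hcB : cB ρ1 = cB ρ2) (hcW : cW ρ1 = cW ρ2)
    (hslot : (r1 - i) / GG ρ1 = (r2 - i) / GG ρ2) : l1 = l2 ∧ r1 = r2 := by
  have h1ρ : 1 ≤ ρ1 := (run_perOn hr1).1
  have h2ρ : 1 ≤ ρ2 := (run_perOn hr2).1
  obtain ⟨hf1a, hf1b, hf1c, hf1d, hf1e⟩ := class_facts h1ρ
  obtain ⟨hf2a, hf2b, hf2c, hf2d, hf2e⟩ := class_facts h2ρ
  have hGG : GG ρ1 = GG ρ2 := by rw [GG, GG, hcB, hcW]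
  have hG1 : 1 ≤ GG ρ1 := by rw [GG]; omega
  rw [← hGG] at hslot
  have hclose := div_close hG1 hslot
  have h1l : 1 ≤ l1 := hr1.1
  have h2l : 1 ≤ l2 := hr2.1
  have h1r : l1 ≤ r1 := hr1.2.1
  have h2r : l2 ≤ r2 := hr2.2.1
  have hGval : GG ρ1 = cB ρ1 + 1 - cW ρ1 := rfl
  rcases lt_trichotomy ρ1 ρ2 with hlt | heq | hgt
  · exfalso
    refine cube_absurd hr1 hr2 hlt (by omega)
      (le_max_left (r1 - 3 * ρ1) (r2 - 3 * ρ2) |>.trans' (by omega))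
      (min_le_left r1 r2) (le_max_right (r1 - 3 * ρ1) (r2 - 3 * ρ2) |>.trans' (by omega))
      (min_le_right r1 r2) (by omega)
  · subst heq
    exact run_eq hr1 hr2 (by omega)
  · exfalso
    refine cube_absurd hr2 hr1 hgt (by omega)
      (le_max_right (r1 - 3 * ρ1) (r2 - 3 * ρ2) |>.trans' (by omega))
      (min_le_right r1 r2) (le_max_left (r1 - 3 * ρ1) (r2 - 3 * ρ2) |>.trans' (by omega))
      (min_le_left r1 r2) (by omega)

lemma famC_eq {S : List α} {i ρ1 ρ2 l1 r1 l2 r2 : ℕ}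
    (hr1 : IsRun S ρ1 l1 r1) (hr2 : IsRun S ρ2 l2 r2)
    (h31 : 3 * ρ1 ≤ r1 - l1 + 1) (h32 : 3 * ρ2 ≤ r2 - l2 + 1)
    (hl1 : l1 ≤ i) (hir1 : i ≤ r1) (hl2 : l2 ≤ i) (hir2 : i ≤ r2)
    (hu1 : ρ1 < i - l1) (hu2 : ρ2 < i - l2)
    (hv1 : ρ1 ≤ r1 - i) (hv2 : ρ2 ≤ r2 - i)
    (hcB : cB ρ1 = cB ρ2) (hcW : cW ρ1 = cW ρ2) : l1 = l2 ∧ r1 = r2 := by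
  have h1ρ : 1 ≤ ρ1 := (run_perOn hr1).1
  have h2ρ : 1 ≤ ρ2 := (run_perOn hr2).1
  obtain ⟨hf1a, hf1b, hf1c, hf1d, hf1e⟩ := class_facts h1ρ
  obtain ⟨hf2a, hf2b, hf2c, hf2d, hf2e⟩ := class_facts h2ρ
  have h1l : 1 ≤ l1 := hr1.1
  have h2l : 1 ≤ l2 := hr2.1
  have h1r : l1 ≤ r1 := hr1.2.1
  have h2r : l2 ≤ r2 := hr2.2.1
  rcases lt_trichotomy ρ1 ρ2 with hlt | heq | hgt
  · exfalso
    refine cube_absurd hr1 hr2 hlt (by omega)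
      (le_max_left (l1 - 1) (l2 - 1)) (min_le_left r1 r2)
      (le_max_right (l1 - 1) (l2 - 1)) (min_le_right r1 r2) (by omega)
  · subst heq
    exact run_eq hr1 hr2 (by omega)
  · exfalso
    refine cube_absurd hr2 hr1 hgt (by omega)
      (le_max_right (l1 - 1) (l2 - 1)) (min_le_right r1 r2)
      (le_max_left (l1 - 1) (l2 - 1)) (min_le_left r1 r2) (by omega)

end HPRuns

open HPRuns in
/-- There is an absolute constant `c` such that for every string `S` of
length `n ≥ 2` and every index `i ∈ [1..n]`, the number of highly periodic
runs of `S` containing `i` is at most `c·log₂ n`. -/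
theorem stmt6 : ∃ c : ℕ, ∀ (α : Type u) (S : List α) (n : ℕ),
    S.length = n → 2 ≤ n → ∀ i : ℕ, 1 ≤ i → i ≤ n →
    {p : ℕ × ℕ | ∃ ρ : ℕ, IsRun S ρ p.1 p.2 ∧ 3 * ρ ≤ p.2 - p.1 + 1 ∧
      p.1 ≤ i ∧ i ≤ p.2}.Finite ∧
    {p : ℕ × ℕ | ∃ ρ : ℕ, IsRun S ρ p.1 p.2 ∧ 3 * ρ ≤ p.2 - p.1 + 1 ∧
      p.1 ≤ i ∧ i ≤ p.2}.ncard ≤ c * Nat.log 2 n := by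
  classical
  refine ⟨36, ?_⟩
  intro β S n hlen hn i hi1 hi2
  set V : Set (ℕ × ℕ) := {p : ℕ × ℕ | ∃ ρ : ℕ, IsRun S ρ p.1 p.2 ∧
    3 * ρ ≤ p.2 - p.1 + 1 ∧ p.1 ≤ i ∧ i ≤ p.2} with hV
  have hmem : ∀ p ∈ V, IsRun S (per (sub S p.1 p.2)) p.1 p.2 ∧
      3 * per (sub S p.1 p.2) ≤ p.2 - p.1 + 1 ∧ p.1 ≤ i ∧ i ≤ p.2 := by
    rintro p ⟨ρ, hr, h3, h4, h5⟩
    have hperp : per (sub S p.1 p.2) = ρ := hr.2.2.2.1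
    rw [hperp]
    exact ⟨hr, h3, h4, h5⟩
  have hsubfin : V ⊆ ↑((Finset.range (n + 1)) ×ˢ (Finset.range (n + 1))) := by
    rintro ⟨l, r⟩ ⟨ρ, hr, -, -, -⟩
    have h1 : l ≤ r := hr.2.1
    have h2 : r ≤ S.length := hr.2.2.1
    simp only [Finset.coe_product, Set.mem_prod, Finset.mem_coe, Finset.mem_range]
    omega
  have hfin : V.Finite := Set.Finite.subset (Finset.finite_toSet _) hsubfin
  refine ⟨hfin, ?_⟩
  set L := Nat.log 2 n with hLdef
  set κ : ℕ × ℕ → ℕ × ℕ × ℕ := fun p =>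
    (clsOf (per (sub S p.1 p.2)),
     if i - p.1 ≤ per (sub S p.1 p.2) then (0, (i - p.1) / GG (per (sub S p.1 p.2)))
     else if p.2 - i < per (sub S p.1 p.2) then (1, (p.2 - i) / GG (per (sub S p.1 p.2)))
     else (2, 0)) with hκ
  have hinj : Set.InjOn κ V := by
    rintro p hp q hq hpq
    obtain ⟨hr1, h31, hl1, hir1⟩ := hmem p hp
    obtain ⟨hr2, h32, hl2, hir2⟩ := hmem q hq
    set ρ1 := per (sub S p.1 p.2) with hρ1
    set ρ2 := per (sub S q.1 q.2) with hρ2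
    rw [hκ] at hpq
    simp only [Prod.mk.injEq] at hpq
    obtain ⟨hcls, hfs⟩ := hpq
    obtain ⟨hcB, hcW⟩ := cls_eq hcls
    have hpair : p.1 = q.1 ∧ p.2 = q.2 := by
      by_cases hA1 : i - p.1 ≤ ρ1 <;> by_cases hA2 : i - q.1 ≤ ρ2
      · rw [if_pos hA1, if_pos hA2] at hfs
        simp only [Prod.mk.injEq] at hfs
        exact famA_eq hr1 hr2 h31 h32 hl1 hir1 hl2 hir2 hA1 hA2 hcB hcW hfs.2
      · rw [if_pos hA1, if_neg hA2] at hfs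
        by_cases hB2 : q.2 - i < ρ2
        · rw [if_pos hB2] at hfs; simp at hfs
        · rw [if_neg hB2] at hfs; simp at hfs
      · rw [if_neg hA1, if_pos hA2] at hfs
        by_cases hB1 : p.2 - i < ρ1
        · rw [if_pos hB1] at hfs; simp at hfs
        · rw [if_neg hB1] at hfs; simp at hfs
      · rw [if_neg hA1, if_neg hA2] at hfs
        by_cases hB1 : p.2 - i < ρ1 <;> by_cases hB2 : q.2 - i < ρ2
        · rw [if_pos hB1, if_pos hB2] at hfs
          simp only [Prod.mk.injEq] at hfs
          exact famB_eq hr1 hr2 h31 h32 hl1 hir1 hl2 hir2 hB1 hB2 hcB hcW hfs.2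
        · rw [if_pos hB1, if_neg hB2] at hfs; simp at hfs
        · rw [if_neg hB1, if_pos hB2] at hfs; simp at hfs
        · rw [if_neg hB1, if_neg hB2] at hfs
          exact famC_eq hr1 hr2 h31 h32 hl1 hir1 hl2 hir2 (by omega) (by omega)
            (by omega) (by omega) hcB hcW
    exact Prod.ext hpair.1 hpair.2
  have himg : κ '' V ⊆
      ↑(Finset.range (2 * L + 2) ×ˢ (Finset.range 3 ×ˢ Finset.range 3)) := by
    rintro x ⟨p, hp, rfl⟩
    obtain ⟨hr1, h31, hl1, hir1⟩ := hmem p hp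
    set ρ1 := per (sub S p.1 p.2) with hρ1
    have h1ρ : 1 ≤ ρ1 := (run_perOn hr1).1
    obtain ⟨hfa, hfb, hfc, hfd, hfe⟩ := class_facts h1ρ
    have hρn : ρ1 ≤ n := by
      have h1 : p.1 ≤ p.2 := hr1.2.1
      have h2 : p.2 ≤ S.length := hr1.2.2.1
      omega
    have hlog : Nat.log 2 ρ1 ≤ L := Nat.log_mono_right hρn
    have hbit : bitOf ρ1 ≤ 1 := by rw [bitOf]; split <;> omega
    have hcls : clsOf ρ1 < 2 * L + 2 := by rw [clsOf]; omega
    have hG1 : 1 ≤ GG ρ1 := by rw [GG]; omega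
    have h3G : cB ρ1 + cW ρ1 ≤ 3 * GG ρ1 := by rw [GG]; omega
    simp only [Finset.coe_product, Set.mem_prod, Finset.mem_coe, Finset.mem_range, hκ]
    refine ⟨hcls, ?_⟩
    by_cases hA : i - p.1 ≤ ρ1
    · rw [if_pos hA]
      refine ⟨by norm_num, ?_⟩
      have : (i - p.1) < 3 * GG ρ1 := by omega
      simpa using (Nat.div_lt_iff_lt_mul hG1).2 (by omega)
    · rw [if_neg hA]
      by_cases hB : p.2 - i < ρ1
      · rw [if_pos hB]
        refine ⟨by norm_num, ?_⟩
        have : (p.2 - i) < 3 * GG ρ1 := by omega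
        simpa using (Nat.div_lt_iff_lt_mul hG1).2 (by omega)
      · rw [if_neg hB]
        exact ⟨by norm_num, by norm_num⟩
  have hL1 : 1 ≤ L := Nat.log_pos (by norm_num) hn
  calc V.ncard = (κ '' V).ncard := (Set.ncard_image_of_injOn hinj).symm
    _ ≤ (Finset.range (2 * L + 2) ×ˢ (Finset.range 3 ×ˢ Finset.range 3)).card := by
        rw [← Set.ncard_coe_finset]
        exact Set.ncard_le_ncard himg (Finset.finite_toSet _)
    _ = (2 * L + 2) * 9 := by simp [Finset.card_product]
    _ ≤ 36 * L := by omega
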